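/- The 1-qubit depolarizing channel N_Dep(ρ) = pρ + (1−p)I/2 with 0 ≤ p < 1 satisfies: for every 1-qubit pure state ψ, the eigenvalues of N_Dep(ψ) are (1+p)/2 and (1−p)/2; consequently its optimal QLDP value is ε*(N_Dep) = ln((1+p)/(1−p)). -/

import Mathlib

open Matrix Kronecker ComplexOrder

noncomputable def lamMax {n : Type*} [Fintype n] (A : Matrix n n ℂ) : ℝ :=
  ⨆ v : {v : n → ℂ // star v ⬝ᵥ v = 1}, (star v.1 ⬝ᵥ A.mulVec v.1).re

noncomputable def lamMin {n : Type*} [Fintype n] (A : Matrix n n ℂ) : ℝ :=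
  ⨅ v : {v : n → ℂ // star v ⬝ᵥ v = 1}, (star v.1 ⬝ᵥ A.mulVec v.1).re

noncomputable def pureState {n : Type*} (v : n → ℂ) : Matrix n n ℂ :=
  Matrix.vecMulVec v (star v)

noncomputable def chanApp {ι n : Type*} [Fintype ι] [Fintype n] (E : ι → Matrix n n ℂ)
    (ρ : Matrix n n ℂ) : Matrix n n ℂ := ∑ k, E k * ρ * (E k)ᴴ

noncomputable def adjApp {ι n : Type*} [Fintype ι] [Fintype n] (E : ι → Matrix n n ℂ)
    (M : Matrix n n ℂ) : Matrix n n ℂ := ∑ k, (E k)ᴴ * M * E k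

/-- The old Mathlib `Matrix.PosSemidef.sqrt` (removed), with its original definition. -/
noncomputable def posSemidefSqrt {n : Type*} [Fintype n] [DecidableEq n] {A : Matrix n n ℂ}
    (hA : A.PosSemidef) : Matrix n n ℂ :=
  hA.1.eigenvectorUnitary.1 * diagonal ((↑) ∘ (Real.sqrt ∘ hA.1.eigenvalues)) *
    (star hA.1.eigenvectorUnitary : Matrix n n ℂ)

noncomputable def traceDist {n : Type*} [Fintype n] [DecidableEq n] (A B : Matrix n n ℂ) : ℝ :=
  ((posSemidefSqrt (Matrix.posSemidef_conjTranspose_mul_self (A - B))).trace).re / 2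

noncomputable def depol {n : Type*} [Fintype n] [DecidableEq n] (D : ℕ) (p : ℝ)
    (ρ : Matrix n n ℂ) : Matrix n n ℂ :=
  (p : ℂ) • ρ + (((1 - p) / D : ℝ) : ℂ) • 1

noncomputable def qldpOf {n : Type*} [Fintype n] (N : Matrix n n ℂ → Matrix n n ℂ) : ℝ :=
  ⨆ v : {v : n → ℂ // star v ⬝ᵥ v = 1},
    Real.log (lamMax (N (pureState v.1)) / lamMin (N (pureState v.1)))

lemma form_eq (p : ℝ) (v w : Fin 2 → ℂ) (hw : star w ⬝ᵥ w = 1) :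
    (star w ⬝ᵥ (depol 2 p (pureState v)).mulVec w).re
      = p * Complex.normSq (star v ⬝ᵥ w) + (1 - p) / 2 := by
  have key : star w ⬝ᵥ (depol 2 p (pureState v)).mulVec w
      = (p : ℂ) * ((starRingEnd ℂ) (star v ⬝ᵥ w) * (star v ⬝ᵥ w)) + (((1 - p) / 2 : ℝ) : ℂ) := by
    simp only [dotProduct, Fin.sum_univ_two, Pi.star_apply, RCLike.star_def] at hw ⊢
    simp only [depol, pureState, Matrix.mulVec, dotProduct, Fin.sum_univ_two,
      Matrix.add_apply, Matrix.smul_apply, Matrix.vecMulVec_apply, Matrix.one_apply,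
      Pi.star_apply, RCLike.star_def, Fin.isValue, map_add, _root_.map_mul,
      Complex.conj_conj, smul_eq_mul]
    push_cast
    simp only [if_pos rfl, if_neg (by decide : ¬ ((0:Fin 2) = 1)),
      if_neg (by decide : ¬ ((1:Fin 2) = 0)), mul_one, mul_zero, add_zero, zero_add]
    linear_combination ((1 - (p:ℂ))/2) * hw
  rw [key]
  have : (starRingEnd ℂ) (star v ⬝ᵥ w) * (star v ⬝ᵥ w) = (Complex.normSq (star v ⬝ᵥ w) : ℂ) := by
    rw [mul_comm, Complex.mul_conj]
  rw [this]
  push_cast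
  simp

lemma cs_le (v w : Fin 2 → ℂ) (hv : star v ⬝ᵥ v = 1) (hw : star w ⬝ᵥ w = 1) :
    Complex.normSq (star v ⬝ᵥ w) ≤ 1 := by
  simp only [dotProduct, Fin.sum_univ_two, Pi.star_apply, RCLike.star_def] at hv hw ⊢
  set a := v 0; set b := v 1; set x := w 0; set y := w 1
  have hid : ((starRingEnd ℂ) a * x + (starRingEnd ℂ) b * y) *
        (starRingEnd ℂ) ((starRingEnd ℂ) a * x + (starRingEnd ℂ) b * y)
      + (a * y - b * x) * (starRingEnd ℂ) (a * y - b * x) = 1 := by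
    simp only [map_add, map_sub, _root_.map_mul, Complex.conj_conj]
    linear_combination ((starRingEnd ℂ) x * x + (starRingEnd ℂ) y * y) * hv + hw
  have hre := congrArg Complex.re hid
  rw [Complex.mul_conj, Complex.mul_conj] at hre
  simp at hre
  nlinarith [Complex.normSq_nonneg (a * y - b * x)]

noncomputable abbrev US := {v : Fin 2 → ℂ // star v ⬝ᵥ v = 1}

instance : Nonempty US := ⟨![1, 0], by simp [dotProduct, Fin.sum_univ_two]⟩

theorem stmt8 {p : ℝ} (hp0 : 0 ≤ p) (hp1 : p < 1) :
    (∀ v : Fin 2 → ℂ, star v ⬝ᵥ v = 1 →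
      lamMax (depol 2 p (pureState v)) = (1 + p) / 2 ∧
      lamMin (depol 2 p (pureState v)) = (1 - p) / 2) ∧
    qldpOf (depol (n := Fin 2) 2 p) = Real.log ((1 + p) / (1 - p)) := by
  have main : ∀ v : Fin 2 → ℂ, star v ⬝ᵥ v = 1 →
      lamMax (depol 2 p (pureState v)) = (1 + p) / 2 ∧
      lamMin (depol 2 p (pureState v)) = (1 - p) / 2 := by
    intro v hv
    -- orthogonal unit vector
    set wp : Fin 2 → ℂ := ![-(starRingEnd ℂ) (v 1), (starRingEnd ℂ) (v 0)] with hwp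
    have hwpu : star wp ⬝ᵥ wp = 1 := by
      simp only [dotProduct, Fin.sum_univ_two, Pi.star_apply, RCLike.star_def] at hv ⊢
      simp only [hwp, Matrix.cons_val_zero, Matrix.cons_val_one, Matrix.head_cons,
        map_neg, Complex.conj_conj]
      linear_combination hv
    have horth : star v ⬝ᵥ wp = 0 := by
      simp only [dotProduct, Fin.sum_univ_two, Pi.star_apply, RCLike.star_def, hwp,
        Matrix.cons_val_zero, Matrix.cons_val_one, Matrix.head_cons]
      ring
    have hub : ∀ u : US, (star u.1 ⬝ᵥ (depol 2 p (pureState v)).mulVec u.1).re ≤ (1 + p) / 2 := by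
      rintro ⟨w, hw⟩
      rw [form_eq p v w hw]
      have := cs_le v w hv hw
      nlinarith
    have hlb : ∀ u : US, (1 - p) / 2 ≤ (star u.1 ⬝ᵥ (depol 2 p (pureState v)).mulVec u.1).re := by
      rintro ⟨w, hw⟩
      rw [form_eq p v w hw]
      have := Complex.normSq_nonneg (star v ⬝ᵥ w)
      nlinarith
    have hvv : (star v ⬝ᵥ (depol 2 p (pureState v)).mulVec v).re = (1 + p) / 2 := by
      rw [form_eq p v v hv, hv]
      simp [Complex.normSq]
      ring
    have hvw : (star wp ⬝ᵥ (depol 2 p (pureState v)).mulVec wp).re = (1 - p) / 2 := by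
      rw [form_eq p v wp hwpu, horth]
      simp
    constructor
    · refine le_antisymm (ciSup_le hub) ?_
      have := le_ciSup (f := fun u : US => (star u.1 ⬝ᵥ (depol 2 p (pureState v)).mulVec u.1).re)
        ⟨(1 + p) / 2, by rintro x ⟨u, rfl⟩; exact hub u⟩ (⟨v, hv⟩ : US)
      rw [hvv] at this
      exact this
    · refine le_antisymm ?_ (le_ciInf hlb)
      have := ciInf_le (f := fun u : US => (star u.1 ⬝ᵥ (depol 2 p (pureState v)).mulVec u.1).re)
        ⟨(1 - p) / 2, by rintro x ⟨u, rfl⟩; exact hlb u⟩ (⟨wp, hwpu⟩ : US)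
      rw [hvw] at this
      exact this
  refine ⟨main, ?_⟩
  have hconst : ∀ u : US,
      Real.log (lamMax (depol 2 p (pureState u.1)) / lamMin (depol 2 p (pureState u.1)))
        = Real.log ((1 + p) / (1 - p)) := by
    rintro ⟨v, hv⟩
    obtain ⟨h1, h2⟩ := main v hv
    rw [h1, h2]
    congr 1
    have h1p : (1 - p) ≠ 0 := by linarith
    field_simp
  unfold qldpOf
  rw [iSup_congr hconst, ciSup_const]
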